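/- arXiv:1510.03265 — 4 statements merged into one kernel-verified Lean document; each statement's English description precedes it below -/
import Mathlib

section
/- Let λ > -1/2 be a real number. For every integer k ≥ 1, ∑_{j=1}^{k} (2j+λ-1)·Γ(2j+2λ-1)/Γ(2j) = Γ(2k+2λ+1)/(2(2λ+1)·Γ(2k)). -/
/-!
Write `F k` for the right-hand side. By `Γ(s + 2) = (s + 1) s Γ(s)`, the difference
`F (k + 1) - F k` is the `(k + 1)`-st summand, because
`(2k + 2λ + 2)(2k + 2λ + 1) - (2k + 1) 2k = (2λ + 1)(4k + 2λ + 2)`; and `F 1` is the first summand.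
-/

theorem Real.Gamma_add_two {s : ℝ} (hs : s ≠ 0) (hs₁ : s + 1 ≠ 0) :
    Real.Gamma (s + 2) = (s + 1) * s * Real.Gamma s := by
  rw [show s + 2 = s + 1 + 1 by ring, Real.Gamma_add_one hs₁, Real.Gamma_add_one hs, mul_assoc]

theorem Real.Gamma_ratio_add_two_sub {x a : ℝ} (hx : 0 < x) (hxa : 0 < x + a + 1) :
    Real.Gamma (x + a + 3) / Real.Gamma (x + 2) - Real.Gamma (x + a + 1) / Real.Gamma x
      = (a + 1) * (2 * x + a + 2) * Real.Gamma (x + a + 1) / Real.Gamma (x + 2) := by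
  rw [show x + a + 3 = (x + a + 1) + 2 by ring, Real.Gamma_add_two (by positivity) (by positivity),
    Real.Gamma_add_two hx.ne' (by positivity)]
  field_simp
  ring

/-- Lemma 2.1 (i): `∑_{j=1}^k α_j² = Γ(2k+2λ+1)/(2(2λ+1)Γ(2k))`. -/
theorem sum_alpha_sq (lam : ℝ) (hlam : lam > -1/2) (k : ℕ) (hk : 1 ≤ k) :
    ∑ j ∈ Finset.Icc 1 k,
        (2*(j : ℝ) + lam - 1) * Real.Gamma (2*(j : ℝ) + 2*lam - 1) / Real.Gamma (2*(j : ℝ))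
      = Real.Gamma (2*(k : ℝ) + 2*lam + 1) / (2*(2*lam + 1) * Real.Gamma (2*(k : ℝ))) := by
  have hlam' : 0 < 2 * lam + 1 := by linarith
  induction k, hk using Nat.le_induction with
  | base =>
    rw [Finset.Icc_self, Finset.sum_singleton, Nat.cast_one, mul_one,
      show 2 + 2 * lam + 1 = (2 * lam + 1) + 2 by ring,
      Real.Gamma_add_two hlam'.ne' (by linarith), show 2 + 2 * lam - 1 = 2 * lam + 1 by ring,
      Real.Gamma_two]
    field_simp
    ring
  | succ n hn ih =>
    have h2n : (0 : ℝ) < 2 * n := by positivity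
    have step := Real.Gamma_ratio_add_two_sub (a := 2 * lam) h2n (by linarith)
    rw [Finset.sum_Icc_succ_top (by omega), ih]
    push_cast
    rw [show 2 * ((n : ℝ) + 1) + 2 * lam - 1 = 2 * n + 2 * lam + 1 by ring,
      show 2 * ((n : ℝ) + 1) + 2 * lam + 1 = 2 * n + 2 * lam + 3 by ring,
      show 2 * ((n : ℝ) + 1) = 2 * n + 2 by ring]
    field_simp at step ⊢
    linear_combination -step
end

section
/- Let λ > -1/2 be a real number with λ ≠ 0. For every integer k ≥ 1, (Γ(2k)·(2k+λ-1)/Γ(2k+2λ-1)) · ∑_{j=1}^{k} (2j+λ-2)·Γ(2j+2λ-2)/Γ(2j-1) = (2k-1)(2k+λ-1)(2k+2λ-1)/(2(2λ+1)). -/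
/-! With `F k = Γ(2k + 2λ) / Γ(2k - 1)`, two applications of `Γ(s + 1) = s Γ(s)` give
`F k - F (k - 1) = 2(2λ + 1) · (2k + λ - 2) Γ(2k + 2λ - 2) / Γ(2k - 1)`,
so the sum telescopes to `F k / (2(2λ + 1))`; the same recursion then reduces its product
with `Γ(2k)(2k + λ - 1) / Γ(2k + 2λ - 1)` to a polynomial. -/

open Finset Real

theorem Real.Gamma_add_two_s6 {s : ℝ} (h0 : s ≠ 0) (h1 : s + 1 ≠ 0) :
    Gamma (s + 2) = (s + 1) * s * Gamma s := by
  rw [show s + 2 = (s + 1) + 1 by ring, Gamma_add_one h1, Gamma_add_one h0, mul_assoc]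

lemma gamma_ratio_sub_gamma_ratio {lam x : ℝ} (hx : 1 < x) (h0 : x + 2 * lam ≠ 0)
    (h1 : x + 2 * lam + 1 ≠ 0) (hlam : 2 * lam + 1 ≠ 0) :
    Gamma (x + 2 * lam + 2) / (2 * (2 * lam + 1) * Gamma (x + 1))
      - Gamma (x + 2 * lam) / (2 * (2 * lam + 1) * Gamma (x - 1))
      = (x + lam) * Gamma (x + 2 * lam) / Gamma (x + 1) := by
  have hx0 : x ≠ 0 := by linarith
  have hx1 : x - 1 ≠ 0 := by linarith
  have hΓx : Gamma (x + 1) = x * (x - 1) * Gamma (x - 1) := by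
    rw [show x + 1 = (x - 1) + 2 by ring, Gamma_add_two_s6 hx1 (by rwa [sub_add_cancel]),
      sub_add_cancel]
  have hΓ : Gamma (x - 1) ≠ 0 := (Gamma_pos_of_pos (by linarith)).ne'
  rw [Gamma_add_two_s6 h0 h1, hΓx]
  field_simp
  ring

lemma sum_Icc_gamma_ratio (lam : ℝ) (hlam : ∀ m : ℕ, 2 * lam ≠ -m) (k : ℕ)
    (hk : 1 ≤ k) :
    ∑ j ∈ Icc 1 k,
        (2 * (j : ℝ) + lam - 2) * Gamma (2 * (j : ℝ) + 2 * lam - 2) / Gamma (2 * (j : ℝ) - 1)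
      = Gamma (2 * (k : ℝ) + 2 * lam) / (2 * (2 * lam + 1) * Gamma (2 * (k : ℝ) - 1)) := by
  have hlam0 : 2 * lam ≠ 0 := by simpa using hlam 0
  have hlam1 : 2 * lam + 1 ≠ 0 := fun h ↦ hlam 1 (by push_cast; linarith)
  induction k, hk using Nat.le_induction with
  | base =>
    rw [Icc_self, sum_singleton, Nat.cast_one, show 2 * (1 : ℝ) + 2 * lam - 2 = 2 * lam by ring,
      show 2 * (1 : ℝ) + 2 * lam = 2 * lam + 2 by ring, Gamma_add_two_s6 hlam0 hlam1,
      show 2 * (1 : ℝ) - 1 = 1 by norm_num, Gamma_one]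
    field_simp
    ring
  | succ k hk ih =>
    have hk1 : (1 : ℝ) ≤ k := by exact_mod_cast hk
    rw [sum_Icc_succ_top (by omega), ih, Nat.cast_succ,
      show 2 * ((k : ℝ) + 1) + 2 * lam - 2 = 2 * k + 2 * lam by ring,
      show 2 * ((k : ℝ) + 1) + 2 * lam = 2 * k + 2 * lam + 2 by ring,
      show 2 * ((k : ℝ) + 1) - 1 = 2 * k + 1 by ring,
      show 2 * ((k : ℝ) + 1) + lam - 2 = 2 * k + lam by ring,
      ← gamma_ratio_sub_gamma_ratio (by linarith) _ _ hlam1]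
    · ring
    · exact fun h ↦ hlam (2 * k) (by push_cast; linarith)
    · exact fun h ↦ hlam (2 * k + 1) (by push_cast; linarith)

/-- Lemma 2.2 (ii): `β̃_k² ∑_{j=1}^k α̃_j² = (2k-1)(2k+λ-1)(2k+2λ-1)/(2(2λ+1))`. -/
theorem betat_sq_mul_sum_alphat_sq (lam : ℝ) (hlam : lam > -1/2) (hlam0 : lam ≠ 0)
    (k : ℕ) (hk : 1 ≤ k) :
    (Real.Gamma (2*(k : ℝ)) * (2*(k : ℝ) + lam - 1) / Real.Gamma (2*(k : ℝ) + 2*lam - 1)) *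
      ∑ j ∈ Finset.Icc 1 k,
        (2*(j : ℝ) + lam - 2) * Real.Gamma (2*(j : ℝ) + 2*lam - 2) / Real.Gamma (2*(j : ℝ) - 1)
      = (2*(k : ℝ) - 1)*(2*(k : ℝ) + lam - 1)*(2*(k : ℝ) + 2*lam - 1) / (2*(2*lam + 1)) := by
  have hk1 : (1 : ℝ) ≤ k := by exact_mod_cast hk
  have hnonint : ∀ m : ℕ, 2 * lam ≠ -m := by
    rintro (_ | m) h
    · exact hlam0 (by simpa using h)
    · push_cast at h; linarith [(m.cast_nonneg : (0 : ℝ) ≤ m)]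
  have hΓk : Gamma (2 * (k : ℝ) - 1) ≠ 0 := (Gamma_pos_of_pos (by linarith)).ne'
  have hΓkl : Gamma (2 * (k : ℝ) + 2 * lam - 1) ≠ 0 := (Gamma_pos_of_pos (by linarith)).ne'
  have hlam1 : 2 * lam + 1 ≠ 0 := by linarith
  have hΓ2k : Gamma (2 * (k : ℝ)) = (2 * k - 1) * Gamma (2 * k - 1) := by
    rw [← Gamma_add_one (by linarith), sub_add_cancel]
  have hΓ2kl :
      Gamma (2 * (k : ℝ) + 2 * lam) = (2 * k + 2 * lam - 1) * Gamma (2 * k + 2 * lam - 1) := by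
    rw [← Gamma_add_one (by linarith), sub_add_cancel]
  rw [sum_Icc_gamma_ratio lam hnonint k hk, hΓ2k, hΓ2kl]
  -- otherwise `field_simp` rewrites this argument of `Γ` to `2 * (k + lam) - 1` and misses `hΓkl`
  generalize Gamma (2 * (k : ℝ) + 2 * lam - 1) = G at hΓkl ⊢
  field_simp
end

section
/- Let λ > -1/2 and let k, i be integers with 1 ≤ k ≤ i. Set β_k = (Γ(2k+1)(2k+λ)/Γ(2k+2λ))^(1/2), S_k = Γ(2k+2λ+1)/(2(2λ+1)Γ(2k)), β̃_k = (Γ(2k)(2k+λ-1)/Γ(2k+2λ-1))^(1/2), and S̃_k = Γ(2k+2λ)/(2(2λ+1)Γ(2k-1)). Then β̃_k·β̃_i·S̃_k < β_k·β_i·S_k. -/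
/-- `β_k = (Γ(2k+1)(2k+λ)/Γ(2k+2λ))^{1/2}`. -/
noncomputable def betaCoef (lam : ℝ) (k : ℕ) : ℝ :=
  Real.sqrt (Real.Gamma (2*(k : ℝ) + 1) * (2*(k : ℝ) + lam) / Real.Gamma (2*(k : ℝ) + 2*lam))

/-- `S_k = Γ(2k+2λ+1)/(2(2λ+1)Γ(2k))`. -/
noncomputable def sCoef (lam : ℝ) (k : ℕ) : ℝ :=
  Real.Gamma (2*(k : ℝ) + 2*lam + 1) / (2*(2*lam + 1) * Real.Gamma (2*(k : ℝ)))

/-- `β̃_k = (Γ(2k)(2k+λ-1)/Γ(2k+2λ-1))^{1/2}`. -/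
noncomputable def betatCoef (lam : ℝ) (k : ℕ) : ℝ :=
  Real.sqrt (Real.Gamma (2*(k : ℝ)) * (2*(k : ℝ) + lam - 1) / Real.Gamma (2*(k : ℝ) + 2*lam - 1))

/-- `S̃_k = Γ(2k+2λ)/(2(2λ+1)Γ(2k-1))`. -/
noncomputable def stCoef (lam : ℝ) (k : ℕ) : ℝ :=
  Real.Gamma (2*(k : ℝ) + 2*lam) / (2*(2*lam + 1) * Real.Gamma (2*(k : ℝ) - 1))

/-!
The Gamma functions cancel in the quotients of the tilded and untilded coefficients:
with `x = 2k`, `β̃_k² / β_k² = ρ(x) = (x+2λ-1)(x+λ-1) / (x(x+λ))` and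
`S̃_k / S_k = q(x) = (x-1)/(x+2λ)`. Hence the claim reads `√ρ(2k) √ρ(2i) q(2k) < 1`, which is
`√(ρ(2k) q(2k)) √(ρ(2i) q(2k)) < 1`, and `ρ(b) q(a) < 1` for `1 ≤ a ≤ b` is a polynomial
inequality.
-/

namespace Gegenbauer

lemma Gamma_eq_sub_one_mul {x : ℝ} (hx : 1 < x) : Real.Gamma x = (x - 1) * Real.Gamma (x - 1) := by
  simpa using Real.Gamma_add_one (s := x - 1) (by linarith)

lemma sqrt_mul_sqrt_mul_lt_one {x y q : ℝ} (hq : 0 ≤ q) (hx : x * q < 1) (hy : y * q < 1) :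
    √x * √y * q < 1 := by
  have hsplit : √x * √y * q = √(x * q) * √(y * q) := by
    rw [Real.sqrt_mul' x hq, Real.sqrt_mul' y hq]
    linear_combination -(√x * √y) * Real.mul_self_sqrt hq
  rw [hsplit]
  exact mul_lt_one_of_nonneg_of_lt_one_left (Real.sqrt_nonneg _)
    ((Real.sqrt_lt' one_pos).2 (by simpa using hx)) ((Real.sqrt_lt' one_pos).2 (by simpa using hy)).le

noncomputable def betaSqRatio (lam x : ℝ) : ℝ := (x + 2*lam - 1) * (x + lam - 1) / (x * (x + lam))

noncomputable def sRatio (lam x : ℝ) : ℝ := (x - 1) / (x + 2*lam)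

variable {lam : ℝ}

lemma betaSqRatio_mul_sRatio_lt_one (hlam : -1/2 < lam) {a b : ℝ} (ha : 1 ≤ a) (hab : a ≤ b) :
    betaSqRatio lam b * sRatio lam a < 1 := by
  have hpos : 0 < b * (b + lam) * (a + 2*lam) :=
    mul_pos (mul_pos (by linarith) (by linarith)) (by linarith)
  rw [betaSqRatio, sRatio, div_mul_div_comm, div_lt_one hpos]
  nlinarith [mul_nonneg (sub_nonneg.2 hab) (by linarith : (0:ℝ) ≤ 2*lam + 1),
    mul_nonneg (mul_nonneg (sub_nonneg.2 hab) (by linarith : (0:ℝ) ≤ b + lam))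
      (by linarith : (0:ℝ) ≤ 2*lam + 1)]

variable {k : ℕ}

lemma two_le_two_mul_cast (hk : 1 ≤ k) : (2:ℝ) ≤ 2 * k := by
  have : (1:ℝ) ≤ k := by exact_mod_cast hk
  linarith

lemma Gamma_ratio_eq_betaSqRatio_mul (hlam : -1/2 < lam) {x : ℝ} (hx : 2 ≤ x) :
    Real.Gamma x * (x + lam - 1) / Real.Gamma (x + 2*lam - 1)
      = betaSqRatio lam x * (Real.Gamma (x + 1) * (x + lam) / Real.Gamma (x + 2*lam)) := by
  have hΓ : Real.Gamma (x + 2*lam - 1) ≠ 0 := (Real.Gamma_pos_of_pos (by linarith)).ne'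
  rw [Real.Gamma_add_one (by linarith), Gamma_eq_sub_one_mul (x := x + 2*lam) (by linarith),
    betaSqRatio, div_mul_div_comm, div_eq_div_iff hΓ]
  · ring
  have : x + lam ≠ 0 := by linarith
  have : x + 2*lam - 1 ≠ 0 := by linarith
  have : x ≠ 0 := by linarith
  positivity

lemma betatCoef_eq_sqrt_mul (hlam : -1/2 < lam) (hk : 1 ≤ k) :
    betatCoef lam k = √(betaSqRatio lam (2 * k)) * betaCoef lam k := by
  have ha := two_le_two_mul_cast hk
  have hratio : 0 ≤ betaSqRatio lam (2 * k) := by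
    have : 0 < 2 * (k:ℝ) + 2*lam - 1 := by linarith
    have : 0 < 2 * (k:ℝ) + lam - 1 := by linarith
    have : 0 < 2 * (k:ℝ) + lam := by linarith
    unfold betaSqRatio; positivity
  rw [betatCoef, betaCoef, ← Real.sqrt_mul hratio, Gamma_ratio_eq_betaSqRatio_mul hlam ha]

lemma Gamma_ratio_eq_sRatio_mul (hlam : -1/2 < lam) {x : ℝ} (hx : 2 ≤ x) :
    Real.Gamma (x + 2*lam) / (2*(2*lam + 1) * Real.Gamma (x - 1))
      = sRatio lam x * (Real.Gamma (x + 2*lam + 1) / (2*(2*lam + 1) * Real.Gamma x)) := by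
  have hΓ : Real.Gamma (x - 1) ≠ 0 := (Real.Gamma_pos_of_pos (by linarith)).ne'
  rw [sRatio, Real.Gamma_add_one (by linarith), Gamma_eq_sub_one_mul (x := x) (by linarith)]
  have : x + 2*lam ≠ 0 := by linarith
  have : x - 1 ≠ 0 := by linarith
  have : 2*lam + 1 ≠ 0 := by linarith
  field_simp

lemma stCoef_eq_sRatio_mul (hlam : -1/2 < lam) (hk : 1 ≤ k) :
    stCoef lam k = sRatio lam (2 * k) * sCoef lam k :=
  Gamma_ratio_eq_sRatio_mul hlam (two_le_two_mul_cast hk)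

lemma betaCoef_pos (hlam : -1/2 < lam) (hk : 1 ≤ k) : 0 < betaCoef lam k := by
  have ha := two_le_two_mul_cast hk
  have : 0 < 2 * (k:ℝ) + lam := by linarith
  have := Real.Gamma_pos_of_pos (by linarith : 0 < 2 * (k:ℝ) + 1)
  have := Real.Gamma_pos_of_pos (by linarith : 0 < 2 * (k:ℝ) + 2*lam)
  unfold betaCoef; positivity

lemma sCoef_pos (hlam : -1/2 < lam) (hk : 1 ≤ k) : 0 < sCoef lam k := by
  have ha := two_le_two_mul_cast hk
  have : 0 < 2*lam + 1 := by linarith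
  have := Real.Gamma_pos_of_pos (by linarith : 0 < 2 * (k:ℝ) + 2*lam + 1)
  have := Real.Gamma_pos_of_pos (by linarith : 0 < 2 * (k:ℝ))
  unfold sCoef; positivity

end Gegenbauer

open Gegenbauer in
/-- Left inequality in (3.2): `ã_{k,i} < a_{k,i}` for `1 ≤ k ≤ i`. -/
theorem entry_lt_left (lam : ℝ) (hlam : lam > -1/2) (k i : ℕ) (hk : 1 ≤ k) (hki : k ≤ i) :
    betatCoef lam k * betatCoef lam i * stCoef lam k
      < betaCoef lam k * betaCoef lam i * sCoef lam k := by
  have hi : 1 ≤ i := hk.trans hki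
  have ha := two_le_two_mul_cast hk
  have hab : 2 * (k:ℝ) ≤ 2 * i := by gcongr
  have hfactor : √(betaSqRatio lam (2 * k)) * √(betaSqRatio lam (2 * i)) * sRatio lam (2 * k) < 1 :=
    sqrt_mul_sqrt_mul_lt_one (div_nonneg (by linarith) (by linarith))
      (betaSqRatio_mul_sRatio_lt_one hlam (by linarith) le_rfl)
      (betaSqRatio_mul_sRatio_lt_one hlam (by linarith) hab)
  have hpos : 0 < betaCoef lam k * betaCoef lam i * sCoef lam k :=
    mul_pos (mul_pos (betaCoef_pos hlam hk) (betaCoef_pos hlam hi)) (sCoef_pos hlam hk)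
  rw [betatCoef_eq_sqrt_mul hlam hk, betatCoef_eq_sqrt_mul hlam hi, stCoef_eq_sRatio_mul hlam hk]
  calc _ = (√(betaSqRatio lam (2 * k)) * √(betaSqRatio lam (2 * i)) * sRatio lam (2 * k))
          * (betaCoef lam k * betaCoef lam i * sCoef lam k) := by ring
    _ < betaCoef lam k * betaCoef lam i * sCoef lam k := mul_lt_of_lt_one_left hpos hfactor
end

section
/- Let λ > -1/2 and let k, i be integers with 1 ≤ k ≤ i. Set β_k = (Γ(2k+1)(2k+λ)/Γ(2k+2λ))^(1/2), S_k = Γ(2k+2λ+1)/(2(2λ+1)Γ(2k)), β̃_k = (Γ(2k)(2k+λ-1)/Γ(2k+2λ-1))^(1/2), and S̃_k = Γ(2k+2λ)/(2(2λ+1)Γ(2k-1)). Then β_k·β_i·S_k < β̃_{k+1}·β̃_{i+1}·S̃_{k+1}. -/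
/-!
Write `x = 2k`, `y = 2i`. Then `β_k`, `β̃_{k+1}` are the square roots of `betaSq λ` at `x` and
`x + 1`, and `S_k`, `S̃_{k+1}` are `sFun λ` at `x` and `x + 1`. By `Γ(z+1) = zΓ(z)` the step from
`x` to `x + 1` multiplies both by rational factors, so after squaring the claim becomes a
polynomial inequality: the product of three elementary ones.
-/

open Real

noncomputable def betaSq (lam z : ℝ) : ℝ :=
  Gamma (z + 1) * (z + lam) / Gamma (z + 2 * lam)

noncomputable def sFun (lam z : ℝ) : ℝ :=
  Gamma (z + 2 * lam + 1) / (2 * (2 * lam + 1) * Gamma z)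

lemma betaCoef_eq_sqrt_betaSq (lam : ℝ) (k : ℕ) :
    betaCoef lam k = √(betaSq lam (2 * k)) :=
  rfl

lemma betatCoef_succ_eq_sqrt_betaSq (lam : ℝ) (k : ℕ) :
    betatCoef lam (k + 1) = √(betaSq lam (2 * k + 1)) := by
  simp only [betatCoef, betaSq]
  push_cast
  ring_nf

lemma sCoef_eq_sFun (lam : ℝ) (k : ℕ) : sCoef lam k = sFun lam (2 * k) :=
  rfl

lemma stCoef_succ_eq_sFun (lam : ℝ) (k : ℕ) : stCoef lam (k + 1) = sFun lam (2 * k + 1) := by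
  simp only [stCoef, sFun]
  push_cast
  ring_nf

lemma betaSq_add_one {lam z : ℝ} (h₁ : z + 1 ≠ 0) (h₂ : z + 2 * lam ≠ 0) (h₃ : z + lam ≠ 0) :
    betaSq lam (z + 1) =
      betaSq lam z * ((z + 1) * (z + lam + 1) / ((z + 2 * lam) * (z + lam))) := by
  simp only [betaSq]
  rw [add_right_comm z 1 (2 * lam), Gamma_add_one h₁, Gamma_add_one h₂]
  field_simp
  ring

lemma sFun_add_one {lam z : ℝ} (hz : z ≠ 0) (h : z + 2 * lam + 1 ≠ 0) :
    sFun lam (z + 1) = sFun lam z * ((z + 2 * lam + 1) / z) := by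
  simp only [sFun]
  rw [show z + 1 + 2 * lam + 1 = z + 2 * lam + 1 + 1 by ring, Gamma_add_one h, Gamma_add_one hz]
  field_simp

lemma betaSq_pos {lam z : ℝ} (hz : 0 < z + 1) (h₁ : 0 < z + lam) (h₂ : 0 < z + 2 * lam) :
    0 < betaSq lam z :=
  div_pos (mul_pos (Gamma_pos_of_pos hz) h₁) (Gamma_pos_of_pos h₂)

lemma sFun_pos {lam z : ℝ} (hlam : -1 / 2 < lam) (hz : 0 < z) (h : 0 < z + 2 * lam + 1) :
    0 < sFun lam z :=
  div_pos (Gamma_pos_of_pos h) (mul_pos (by linarith) (Gamma_pos_of_pos hz))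

lemma one_lt_growth_factor {l x y : ℝ} (hl : -1 / 2 < l) (hx : 1 ≤ x) (hxy : x ≤ y) :
    1 < (x + 1) * (x + l + 1) / ((x + 2 * l) * (x + l))
      * ((y + 1) * (y + l + 1) / ((y + 2 * l) * (y + l))) * ((x + 2 * l + 1) / x) ^ 2 := by
  have hxl : 0 < x + l := by linarith
  have hx2l : 0 < x + 2 * l := by linarith
  have hy2l : 0 < y + 2 * l := by linarith
  have hyl : 0 < y + l := by linarith
  have h₁ : x * (x + 2 * l) < (x + 1) * (x + 2 * l + 1) := by nlinarith
  have h₂ : x * (y + 2 * l) < (y + 1) * (x + 2 * l + 1) := by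
    nlinarith [mul_nonneg (by linarith : (0 : ℝ) ≤ 2 * l + 1) (by linarith : (0 : ℝ) ≤ y - x)]
  have h₃ : (x + l) * (y + l) < (x + l + 1) * (y + l + 1) := by nlinarith
  rw [div_mul_div_comm, div_pow, div_mul_div_comm, one_lt_div (by positivity)]
  calc (x + 2 * l) * (x + l) * ((y + 2 * l) * (y + l)) * x ^ 2
      = (x * (x + 2 * l)) * (x * (y + 2 * l)) * ((x + l) * (y + l)) := by ring
    _ < ((x + 1) * (x + 2 * l + 1)) * ((y + 1) * (x + 2 * l + 1))
          * ((x + l + 1) * (y + l + 1)) := by gcongr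
    _ = (x + 1) * (x + l + 1) * ((y + 1) * (y + l + 1)) * (x + 2 * l + 1) ^ 2 := by ring

lemma sqrt_betaSq_mul_sqrt_betaSq_mul_sFun_lt {lam x y : ℝ} (hlam : -1 / 2 < lam) (hx : 1 ≤ x)
    (hxy : x ≤ y) :
    √(betaSq lam x) * √(betaSq lam y) * sFun lam x
      < √(betaSq lam (x + 1)) * √(betaSq lam (y + 1)) * sFun lam (x + 1) := by
  have hbx : 0 < betaSq lam x := betaSq_pos (by linarith) (by linarith) (by linarith)
  have hby : 0 < betaSq lam y := betaSq_pos (by linarith) (by linarith) (by linarith)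
  have hbx' : 0 < betaSq lam (x + 1) := betaSq_pos (by linarith) (by linarith) (by linarith)
  have hby' : 0 < betaSq lam (y + 1) := betaSq_pos (by linarith) (by linarith) (by linarith)
  have hsx : 0 < sFun lam x := sFun_pos hlam (by linarith) (by linarith)
  have hsx' : 0 < sFun lam (x + 1) := sFun_pos hlam (by linarith) (by linarith)
  refine lt_of_pow_lt_pow_left₀ 2 (by positivity) ?_
  rw [mul_pow, mul_pow, mul_pow, mul_pow, sq_sqrt hbx.le, sq_sqrt hby.le, sq_sqrt hbx'.le,
    sq_sqrt hby'.le, betaSq_add_one (by linarith) (by linarith) (by linarith),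
    betaSq_add_one (by linarith) (by linarith) (by linarith),
    sFun_add_one (by linarith) (by linarith)]
  calc betaSq lam x * betaSq lam y * sFun lam x ^ 2
      < betaSq lam x * betaSq lam y * sFun lam x ^ 2 * _ :=
        lt_mul_of_one_lt_right (by positivity) (one_lt_growth_factor hlam hx hxy)
    _ = _ := by ring

/-- Right inequality in (3.2): `a_{k,i} < ã_{k+1,i+1}` for `1 ≤ k ≤ i`. -/
theorem entry_lt_right (lam : ℝ) (hlam : lam > -1/2) (k i : ℕ) (hk : 1 ≤ k) (hki : k ≤ i) :
    betaCoef lam k * betaCoef lam i * sCoef lam k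
      < betatCoef lam (k+1) * betatCoef lam (i+1) * stCoef lam (k+1) := by
  rw [betaCoef_eq_sqrt_betaSq, betaCoef_eq_sqrt_betaSq, sCoef_eq_sFun,
    betatCoef_succ_eq_sqrt_betaSq, betatCoef_succ_eq_sqrt_betaSq, stCoef_succ_eq_sFun]
  have hk' : (1 : ℝ) ≤ k := by exact_mod_cast hk
  have hki' : (k : ℝ) ≤ i := by exact_mod_cast hki
  exact sqrt_betaSq_mul_sqrt_betaSq_mul_sFun_lt hlam (by linarith) (by linarith)
end
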